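/- arXiv:2404.04523 — 4 statements merged into one kernel-verified Lean document; each statement's English description precedes it below -/
import Mathlib

section
/- Let γ > 0, δ > 0 and A₀ > 0 with √(2γ) − δ/γ > 0 and δ < √(2γ³). Let (ψ, η, r) be a unidirectional Stokes wave solution such that ψ_y(x, η(x)) ≥ √(2γ) − δ/γ for all x ∈ ℝ and η̂ ≤ A₀·√(2/γ). Then η̂ ≤ √(2/γ) · 1/(1 − δ/√(2γ³)); in particular this bound is independent of A₀. -/
noncomputable section

open Real Set

/-- Partial derivative of `ψ` in the horizontal variable. -/
def px (ψ : ℝ → ℝ → ℝ) (x y : ℝ) : ℝ := deriv (fun t => ψ t y) x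

/-- Partial derivative of `ψ` in the vertical variable. -/
def py (ψ : ℝ → ℝ → ℝ) (x y : ℝ) : ℝ := deriv (fun t => ψ x t) y

/-- Second partial derivative in `x`. -/
def pxx (ψ : ℝ → ℝ → ℝ) (x y : ℝ) : ℝ := deriv (fun t => px ψ t y) x

/-- Second partial derivative in `y`. -/
def pyy (ψ : ℝ → ℝ → ℝ) (x y : ℝ) : ℝ := deriv (fun t => py ψ x t) y

/-- Depth `d(s)` of the laminar (stream) flow with surface value `s` of `ψ_y`. -/
def lamDepth (γ s : ℝ) : ℝ := (-s + Real.sqrt (s ^ 2 + 2 * γ)) / γ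

/-- Bernoulli constant `R(s) = ½ s² + γ + d(s)` of the laminar flow. -/
def bernR (γ s : ℝ) : ℝ := s ^ 2 / 2 + γ + lamDepth γ s

/-- `s` is the (unique) positive critical point `s_c` of `R`, characterized by the
equation `s - 1/γ + s/(γ √(s² + 2γ)) = 0`. -/
def IsCrit (γ s : ℝ) : Prop :=
  0 < s ∧ s - 1 / γ + s / (γ * Real.sqrt (s ^ 2 + 2 * γ)) = 0

/-- A solution `(ψ, η, r)` of the stream-function formulation with constant adverse
vorticity `ω = -γ`:  `Δψ = γ` in the fluid domain `D_η`, the Bernoulli condition on the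
surface, `ψ = 1` on the surface and `ψ = 0` on the flat bottom. -/
structure StreamSolution (γ : ℝ) (ψ : ℝ → ℝ → ℝ) (η : ℝ → ℝ) (r : ℝ) : Prop where
  eta_smooth : ContDiff ℝ (⊤ : ℕ∞) η
  eta_pos : ∀ x, 0 < η x
  psi_smooth : ContDiff ℝ (⊤ : ℕ∞) (fun p : ℝ × ℝ => ψ p.1 p.2)
  laplace : ∀ x y, 0 < y → y < η x → pxx ψ x y + pyy ψ x y = γ
  bernoulli : ∀ x, (px ψ x (η x)) ^ 2 / 2 + (py ψ x (η x)) ^ 2 / 2 + η x = r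
  surface_val : ∀ x, ψ x (η x) = 1
  bottom_val : ∀ x, ψ x 0 = 0

/-- The flow is unidirectional: `ψ_y > 0` everywhere in the fluid domain `D_η`. -/
def Unidirectional (ψ : ℝ → ℝ → ℝ) (η : ℝ → ℝ) : Prop :=
  ∀ x y, 0 < y → y < η x → 0 < py ψ x y

/-- A Stokes wave with half-period `Λ`: the solution is `2Λ`-periodic and even in `x`,
and the surface profile is strictly decreasing from the crest (`x = 0`) to the
trough (`x = Λ`).  Thus `η̂ = max η = η 0` and `η̌ = min η = η Λ`. -/
structure StokesWave (γ : ℝ) (ψ : ℝ → ℝ → ℝ) (η : ℝ → ℝ) (r Λ : ℝ) : Prop where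
  sol : StreamSolution γ ψ η r
  lam_pos : 0 < Λ
  eta_periodic : ∀ x, η (x + 2 * Λ) = η x
  eta_even : ∀ x, η (-x) = η x
  psi_periodic : ∀ x y, ψ (x + 2 * Λ) y = ψ x y
  psi_even : ∀ x y, ψ (-x) y = ψ x y
  eta_anti : StrictAntiOn η (Set.Icc 0 Λ)

/-- A solitary wave (relative to the critical value `sc = s_c` of `γ`): the solution is
even in `x`, the profile is strictly decreasing on `(0, ∞)` and non-constant, and the
flow converges to a supercritical laminar flow `(U(·; s), d(s))` with `s > s_c`,
`R(s) = r` as `|x| → ∞`.  The crest is at `x = 0`, `η̂ = η 0` and `η̌ = inf η = d(s)`. -/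
structure SolitaryWave (γ sc : ℝ) (ψ : ℝ → ℝ → ℝ) (η : ℝ → ℝ) (r : ℝ) : Prop where
  sol : StreamSolution γ ψ η r
  eta_even : ∀ x, η (-x) = η x
  psi_even : ∀ x y, ψ (-x) y = ψ x y
  eta_anti : StrictAntiOn η (Set.Ioi 0)
  nonconst : ∃ x₁ x₂, η x₁ ≠ η x₂
  asymptotic : ∃ s, sc < s ∧ bernR γ s = r ∧
    ∀ ε > 0, ∃ X : ℝ, ∀ x : ℝ, X ≤ |x| →
      |η x - lamDepth γ s| ≤ ε ∧
      ∀ y ∈ Set.Icc 0 (η x), |px ψ x y| + |py ψ x y - (γ * y + s)| ≤ ε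

namespace CrestAux

variable {ψ : ℝ → ℝ → ℝ}

lemma vertDeriv (hΨ : ContDiff ℝ (⊤ : ℕ∞) (fun p : ℝ × ℝ => ψ p.1 p.2)) (x y : ℝ) :
    HasDerivAt (fun t => ψ x t)
      (fderiv ℝ (fun p : ℝ × ℝ => ψ p.1 p.2) (x, y) (0, 1)) y := by
  have h1 : HasDerivAt (fun t : ℝ => ((x, t) : ℝ × ℝ)) ((0 : ℝ), (1 : ℝ)) y :=
    (hasDerivAt_const y x).prodMk (hasDerivAt_id y)
  exact ((hΨ.differentiable (by simp) (x, y)).hasFDerivAt).comp_hasDerivAt y h1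

lemma horizDeriv (hΨ : ContDiff ℝ (⊤ : ℕ∞) (fun p : ℝ × ℝ => ψ p.1 p.2)) (x y : ℝ) :
    HasDerivAt (fun t => ψ t y)
      (fderiv ℝ (fun p : ℝ × ℝ => ψ p.1 p.2) (x, y) (1, 0)) x := by
  have h1 : HasDerivAt (fun t : ℝ => ((t, y) : ℝ × ℝ)) ((1 : ℝ), (0 : ℝ)) x :=
    (hasDerivAt_id x).prodMk (hasDerivAt_const x y)
  exact ((hΨ.differentiable (by simp) (x, y)).hasFDerivAt).comp_hasDerivAt x h1

lemma py_eq (hΨ : ContDiff ℝ (⊤ : ℕ∞) (fun p : ℝ × ℝ => ψ p.1 p.2)) (x y : ℝ) :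
    py ψ x y = fderiv ℝ (fun p : ℝ × ℝ => ψ p.1 p.2) (x, y) (0, 1) :=
  (vertDeriv hΨ x y).deriv

lemma px_eq (hΨ : ContDiff ℝ (⊤ : ℕ∞) (fun p : ℝ × ℝ => ψ p.1 p.2)) (x y : ℝ) :
    px ψ x y = fderiv ℝ (fun p : ℝ × ℝ => ψ p.1 p.2) (x, y) (1, 0) :=
  (horizDeriv hΨ x y).deriv

lemma contDiff_F (hΨ : ContDiff ℝ (⊤ : ℕ∞) (fun p : ℝ × ℝ => ψ p.1 p.2)) :
    ContDiff ℝ (⊤ : ℕ∞) (fderiv ℝ (fun p : ℝ × ℝ => ψ p.1 p.2)) :=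
  hΨ.fderiv_right (by simp)

lemma hasFDerivAt_Fapp (hΨ : ContDiff ℝ (⊤ : ℕ∞) (fun p : ℝ × ℝ => ψ p.1 p.2))
    (p : ℝ × ℝ) (v : ℝ × ℝ) :
    HasFDerivAt (fun q : ℝ × ℝ => fderiv ℝ (fun p : ℝ × ℝ => ψ p.1 p.2) q v)
      ((ContinuousLinearMap.apply ℝ ℝ v).comp
        (fderiv ℝ (fderiv ℝ (fun p : ℝ × ℝ => ψ p.1 p.2)) p)) p := by
  exact (ContinuousLinearMap.apply ℝ ℝ v).hasFDerivAt.comp p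
    (((contDiff_F hΨ).differentiable (by simp) p).hasFDerivAt)

lemma sym (hΨ : ContDiff ℝ (⊤ : ℕ∞) (fun p : ℝ × ℝ => ψ p.1 p.2)) (p : ℝ × ℝ) (v w : ℝ × ℝ) :
    fderiv ℝ (fderiv ℝ (fun p : ℝ × ℝ => ψ p.1 p.2)) p v w
      = fderiv ℝ (fderiv ℝ (fun p : ℝ × ℝ => ψ p.1 p.2)) p w v :=
  second_derivative_symmetric
    (fun q => ((hΨ.differentiable (by simp)) q).hasFDerivAt)
    (((contDiff_F hΨ).differentiable (by simp) p).hasFDerivAt) v w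

lemma laplace_F (hΨ : ContDiff ℝ (⊤ : ℕ∞) (fun p : ℝ × ℝ => ψ p.1 p.2)) {x y γ : ℝ}
    (h : pxx ψ x y + pyy ψ x y = γ) :
    fderiv ℝ (fderiv ℝ (fun p : ℝ × ℝ => ψ p.1 p.2)) (x, y) (1, 0) (1, 0)
      + fderiv ℝ (fderiv ℝ (fun p : ℝ × ℝ => ψ p.1 p.2)) (x, y) (0, 1) (0, 1) = γ := by
  have hxx : pxx ψ x y
      = fderiv ℝ (fderiv ℝ (fun p : ℝ × ℝ => ψ p.1 p.2)) (x, y) (1, 0) (1, 0) := by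
    have h1 : HasDerivAt (fun t : ℝ => ((t, y) : ℝ × ℝ)) ((1 : ℝ), (0 : ℝ)) x :=
      (hasDerivAt_id x).prodMk (hasDerivAt_const x y)
    have h2 := (hasFDerivAt_Fapp hΨ (x, y) ((1 : ℝ), (0 : ℝ))).comp_hasDerivAt x h1
    have h3 : (fun t : ℝ => px ψ t y)
        = fun t : ℝ => fderiv ℝ (fun p : ℝ × ℝ => ψ p.1 p.2) (t, y) (1, 0) := by
      funext t; exact px_eq hΨ t y
    rw [pxx, h3]
    exact h2.deriv
  have hyy : pyy ψ x y
      = fderiv ℝ (fderiv ℝ (fun p : ℝ × ℝ => ψ p.1 p.2)) (x, y) (0, 1) (0, 1) := by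
    have h1 : HasDerivAt (fun t : ℝ => ((x, t) : ℝ × ℝ)) ((0 : ℝ), (1 : ℝ)) y :=
      (hasDerivAt_const y x).prodMk (hasDerivAt_id y)
    have h2 := (hasFDerivAt_Fapp hΨ (x, y) ((0 : ℝ), (1 : ℝ))).comp_hasDerivAt y h1
    have h3 : (fun t : ℝ => py ψ x t)
        = fun t : ℝ => fderiv ℝ (fun p : ℝ × ℝ => ψ p.1 p.2) (x, t) (0, 1) := by
      funext t; exact py_eq hΨ x t
    rw [pyy, h3]
    exact h2.deriv
  rw [← hxx, ← hyy]; linarith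

lemma diffH (hΨ : ContDiff ℝ (⊤ : ℕ∞) (fun p : ℝ × ℝ => ψ p.1 p.2)) (k γ : ℝ) (z : ℂ)
    (hlap : pxx ψ z.re z.im + pyy ψ z.re z.im = γ) :
    DifferentiableAt ℂ (fun w : ℂ =>
      ((fderiv ℝ (fun p : ℝ × ℝ => ψ p.1 p.2) (w.re, w.im) (0, 1) - k * w.im : ℝ) : ℂ)
      + (fderiv ℝ (fun p : ℝ × ℝ => ψ p.1 p.2) (w.re, w.im) (1, 0) + (k - γ) * w.re : ℝ)
          • Complex.I) z := by
  set F := fderiv ℝ (fun p : ℝ × ℝ => ψ p.1 p.2) with hF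
  set G := fderiv ℝ F (z.re, z.im) with hG
  set mC : ℂ →L[ℝ] ℝ × ℝ := Complex.reCLM.prod Complex.imCLM with hmCdef
  have hmC : HasFDerivAt (fun w : ℂ => ((w.re, w.im) : ℝ × ℝ)) mC z := mC.hasFDerivAt
  set Lu : ℝ × ℝ →L[ℝ] ℝ :=
    ((ContinuousLinearMap.apply ℝ ℝ (((0 : ℝ), (1 : ℝ)) : ℝ × ℝ)).comp G)
      - k • (ContinuousLinearMap.snd ℝ ℝ ℝ) with hLu
  set Lv : ℝ × ℝ →L[ℝ] ℝ :=
    ((ContinuousLinearMap.apply ℝ ℝ (((1 : ℝ), (0 : ℝ)) : ℝ × ℝ)).comp G)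
      + (k - γ) • (ContinuousLinearMap.fst ℝ ℝ ℝ) with hLv
  have hu : HasFDerivAt (fun q : ℝ × ℝ => F q (0, 1) - k * q.2) Lu (z.re, z.im) := by
    have h2 : HasFDerivAt (fun q : ℝ × ℝ => k * q.2)
        (k • (ContinuousLinearMap.snd ℝ ℝ ℝ)) (z.re, z.im) :=
      hasFDerivAt_snd.const_mul k
    exact (hasFDerivAt_Fapp hΨ (z.re, z.im) (0, 1)).sub h2
  have hv : HasFDerivAt (fun q : ℝ × ℝ => F q (1, 0) + (k - γ) * q.1) Lv (z.re, z.im) := by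
    have h2 : HasFDerivAt (fun q : ℝ × ℝ => (k - γ) * q.1)
        ((k - γ) • (ContinuousLinearMap.fst ℝ ℝ ℝ)) (z.re, z.im) :=
      hasFDerivAt_fst.const_mul (k - γ)
    exact (hasFDerivAt_Fapp hΨ (z.re, z.im) (1, 0)).add h2
  have h1 : HasFDerivAt (fun w : ℂ => F (w.re, w.im) (0, 1) - k * w.im)
      (Lu.comp mC) z := by have := hu.comp z hmC; exact this
  have h2 : HasFDerivAt (fun w : ℂ => ((F (w.re, w.im) (0, 1) - k * w.im : ℝ) : ℂ))
      (Complex.ofRealCLM.comp (Lu.comp mC)) z := Complex.ofRealCLM.hasFDerivAt.comp z h1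
  have h3 : HasFDerivAt (fun w : ℂ => F (w.re, w.im) (1, 0) + (k - γ) * w.re)
      (Lv.comp mC) z := by have := hv.comp z hmC; exact this
  have h4 : HasFDerivAt
      (fun w : ℂ => (F (w.re, w.im) (1, 0) + (k - γ) * w.re : ℝ) • Complex.I)
      ((ContinuousLinearMap.toSpanSingleton ℝ Complex.I).comp (Lv.comp mC)) z :=
    (ContinuousLinearMap.toSpanSingleton ℝ Complex.I).hasFDerivAt.comp z h3
  have hH := h2.add h4
  set d : ℂ := (G (1, 0) (0, 1) : ℝ) + (G (1, 0) (1, 0) + k - γ) * Complex.I with hd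
  have hres : (d • (1 : ℂ →L[ℂ] ℂ)).restrictScalars ℝ
      = (Complex.ofRealCLM.comp (Lu.comp mC))
        + ((ContinuousLinearMap.toSpanSingleton ℝ Complex.I).comp (Lv.comp mC)) := by
    have hlap2 := laplace_F hΨ hlap
    have hsym2 := sym hΨ (z.re, z.im) (0, 1) (1, 0)
    rw [← hF] at hlap2 hsym2
    rw [← hG] at hlap2 hsym2
    apply ContinuousLinearMap.ext; intro w
    rw [hLu, hLv, hmCdef]
    have hw : ((w.re, w.im) : ℝ × ℝ)
        = w.re • (((1 : ℝ), (0 : ℝ)) : ℝ × ℝ) + w.im • (((0 : ℝ), (1 : ℝ)) : ℝ × ℝ) := by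
      simp [Prod.ext_iff]
    simp only [ContinuousLinearMap.coe_restrictScalars', ContinuousLinearMap.smul_apply,
      ContinuousLinearMap.one_apply, smul_eq_mul, ContinuousLinearMap.add_apply,
      ContinuousLinearMap.coe_comp', Function.comp_apply, ContinuousLinearMap.prod_apply,
      Complex.ofRealCLM_apply, ContinuousLinearMap.toSpanSingleton_apply,
      ContinuousLinearMap.coe_sub', ContinuousLinearMap.apply_apply,
      ContinuousLinearMap.coe_smul', Pi.smul_apply, Pi.sub_apply, Pi.add_apply,
      ContinuousLinearMap.coe_fst', ContinuousLinearMap.coe_snd', Complex.reCLM_apply,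
      Complex.imCLM_apply]
    rw [hw, map_add, G.map_smul, G.map_smul]
    simp only [ContinuousLinearMap.add_apply, ContinuousLinearMap.smul_apply, smul_eq_mul]
    have he : G (0, 1) (0, 1) = γ - G (1, 0) (1, 0) := by linarith
    rw [he, hsym2]
    have hdre : d.re = G (1, 0) (0, 1) := by
      rw [hd]; simp
    have hdim : d.im = G (1, 0) (1, 0) + k - γ := by
      rw [hd]; simp
    apply Complex.ext
    · simp only [Complex.mul_re, hdre, hdim, Complex.add_re, Complex.ofReal_re,
        Complex.real_smul, Complex.mul_im, Complex.I_re, Complex.I_im, Complex.ofReal_im,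
        Complex.add_im, mul_zero, mul_one, zero_add, add_zero, sub_zero]
      ring
    · simp only [Complex.mul_re, hdre, hdim, Complex.add_re, Complex.ofReal_re,
        Complex.real_smul, Complex.mul_im, Complex.I_re, Complex.I_im, Complex.ofReal_im,
        Complex.add_im, mul_zero, mul_one, zero_add, add_zero, sub_zero]
      ring
  have := hasFDerivAt_of_restrictScalars ℝ hH hres
  exact this.differentiableAt

end CrestAux

/-- Lemma 4.3: if `ψ_y ≥ √(2γ) - δ/γ > 0` on the whole surface and `η̂ ≤ A₀ √(2/γ)`, then
`η̂ ≤ √(2/γ) / (1 - δ/√(2γ³))`; in particular the bound is independent of `A₀`. -/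


theorem improved_crest_bound :
    ∀ γ δ A₀ : ℝ, 0 < γ → 0 < δ → 0 < A₀ →
      Real.sqrt (2 * γ) - δ / γ > 0 → δ < Real.sqrt (2 * γ ^ 3) →
      ∀ (ψ : ℝ → ℝ → ℝ) (η : ℝ → ℝ) (r Λ : ℝ),
        StokesWave γ ψ η r Λ → Unidirectional ψ η →
        (∀ x : ℝ, py ψ x (η x) ≥ Real.sqrt (2 * γ) - δ / γ) →
        η 0 ≤ A₀ * Real.sqrt (2 / γ) →
        η 0 ≤ Real.sqrt (2 / γ) * (1 / (1 - δ / Real.sqrt (2 * γ ^ 3))) := by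
  intro γ δ A₀ hγ hδ hA₀ hcpos hδlt ψ η r Λ hw huni hsurf hA
  clear hA hA₀ hδlt
  obtain ⟨S, hΛ, hper, heven, hψper, hψeven, hanti⟩ := hw
  have hΨ := S.psi_smooth
  have hηc : Continuous η := S.eta_smooth.continuous
  set c : ℝ := Real.sqrt (2 * γ) - δ / γ with hcdef
  have hc : 0 < c := hcpos
  have hη0 : 0 < η 0 := S.eta_pos 0
  set k : ℝ := c / η 0 with hkdef
  have hk : 0 < k := div_pos hc hη0
  set F := fderiv ℝ (fun p : ℝ × ℝ => ψ p.1 p.2) with hFdef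
  -- η is maximal at 0 and minimal at Λ
  have hIcc : ∀ x ∈ Icc (0:ℝ) Λ, η x ≤ η 0 := by
    intro x hx
    rcases eq_or_lt_of_le hx.1 with h | h
    · rw [← h]
    · exact (hanti (left_mem_Icc.mpr hΛ.le) hx h).le
  have hIccΛ : ∀ x ∈ Icc (0:ℝ) Λ, η Λ ≤ η x := by
    intro x hx
    rcases eq_or_lt_of_le hx.2 with h | h
    · rw [h]
    · exact (hanti hx (right_mem_Icc.mpr hΛ.le) h).le
  have hperiodic : Function.Periodic η (2 * Λ) := hper
  have hred : ∀ x : ℝ, ∃ y ∈ Icc (0:ℝ) Λ, η x = η y := by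
    intro x
    obtain ⟨y, hy, hxy⟩ := hperiodic.exists_mem_Ico (by linarith) x (-Λ)
    have hy2 : y < Λ := by have := hy.2; linarith
    rcases le_or_gt 0 y with h0 | h0
    · exact ⟨y, ⟨h0, hy2.le⟩, hxy⟩
    · refine ⟨-y, ⟨by linarith, by have := hy.1; linarith⟩, ?_⟩
      rw [hxy, ← heven y]
  have hmax : ∀ x, η x ≤ η 0 := by
    intro x; obtain ⟨y, hy, he⟩ := hred x; rw [he]; exact hIcc y hy
  have hmin : ∀ x, η Λ ≤ η x := by
    intro x; obtain ⟨y, hy, he⟩ := hred x; rw [he]; exact hIccΛ y hy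
  have hηΛ : 0 < η Λ := S.eta_pos Λ
  -- periodicity of p_y
  have hpyper : ∀ x y : ℝ, py ψ (x + 2 * Λ) y = py ψ x y := by
    intro x y
    have h : (fun t => ψ (x + 2 * Λ) t) = fun t => ψ x t :=
      funext fun t => hψper x t
    simp only [py, h]
  -- continuity facts
  have hFcont : Continuous F := (CrestAux.contDiff_F hΨ).continuous
  have hPcont : Continuous (fun q : ℝ × ℝ => F q (0, 1)) :=
    (ContinuousLinearMap.apply ℝ ℝ (((0:ℝ), (1:ℝ)) : ℝ × ℝ)).continuous.comp hFcont
  have hQcont : Continuous (fun q : ℝ × ℝ => F q (1, 0)) :=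
    (ContinuousLinearMap.apply ℝ ℝ (((1:ℝ), (0:ℝ)) : ℝ × ℝ)).continuous.comp hFcont
  -- p_y is nonnegative on the bottom
  have hbot : ∀ x : ℝ, 0 ≤ py ψ x 0 := by
    intro x
    rw [CrestAux.py_eq hΨ, ← hFdef]
    have h1 : Continuous fun t : ℝ => F (x, t) (0, 1) :=
      hPcont.comp (continuous_const.prodMk continuous_id)
    have h2 : Filter.Tendsto (fun t : ℝ => F (x, t) (0, 1)) (nhdsWithin 0 (Ioi 0))
        (nhds (F (x, 0) (0, 1))) := (h1.tendsto 0).mono_left nhdsWithin_le_nhds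
    refine ge_of_tendsto h2 ?_
    filter_upwards [Ioo_mem_nhdsGT_of_mem (left_mem_Ico.mpr (S.eta_pos x))] with t ht
    have := huni x t ht.1 ht.2
    rw [CrestAux.py_eq hΨ, ← hFdef] at this
    exact this.le
  -- the complex domain
  set U : Set ℂ := {z : ℂ | -Λ < z.re ∧ z.re < 3 * Λ ∧ 0 < z.im ∧ z.im < η z.re}
    with hUdef
  set W : ℂ → ℝ := fun z => F (z.re, z.im) (0, 1) - k * z.im with hWdef
  set H : ℂ → ℂ := fun w : ℂ =>
      ((F (w.re, w.im) (0, 1) - k * w.im : ℝ) : ℂ)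
      + (F (w.re, w.im) (1, 0) + (k - γ) * w.re : ℝ) • Complex.I with hHdef
  set f : ℂ → ℂ := fun z => Complex.exp (-(H z)) with hfdef
  have hHcont : Continuous H := by
    have h1 : Continuous fun w : ℂ => F (w.re, w.im) (0, 1) - k * w.im :=
      (hPcont.comp (Complex.continuous_re.prodMk Complex.continuous_im)).sub
        (continuous_const.mul Complex.continuous_im)
    have h2 : Continuous fun w : ℂ => F (w.re, w.im) (1, 0) + (k - γ) * w.re :=
      (hQcont.comp (Complex.continuous_re.prodMk Complex.continuous_im)).add
        (continuous_const.mul Complex.continuous_re)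
    exact (Complex.continuous_ofReal.comp h1).add (h2.smul continuous_const)
  have hfcont : Continuous f := Complex.continuous_exp.comp hHcont.neg
  have hfd : DiffContOnCl ℂ f U := by
    constructor
    · intro z hz
      have hlap : pxx ψ z.re z.im + pyy ψ z.re z.im = γ :=
        S.laplace z.re z.im hz.2.2.1 hz.2.2.2
      have := (CrestAux.diffH hΨ k γ z hlap).neg.cexp
      exact this.differentiableWithinAt
    · exact hfcont.continuousOn
  have hUopen : IsOpen U := by
    have h1 : IsOpen {z : ℂ | -Λ < z.re} := isOpen_lt continuous_const Complex.continuous_re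
    have h2 : IsOpen {z : ℂ | z.re < 3 * Λ} := isOpen_lt Complex.continuous_re continuous_const
    have h3 : IsOpen {z : ℂ | 0 < z.im} := isOpen_lt continuous_const Complex.continuous_im
    have h4 : IsOpen {z : ℂ | z.im < η z.re} :=
      isOpen_lt Complex.continuous_im (hηc.comp Complex.continuous_re)
    exact h1.inter (h2.inter (h3.inter h4))
  have hbounded : Bornology.IsBounded U := by
    refine (Metric.isBounded_closedBall (x := (0:ℂ)) (r := 3 * Λ + η 0)).subset ?_
    intro z hz
    rw [Metric.mem_closedBall, dist_zero_right]
    have h1 : |z.re| ≤ 3 * Λ := abs_le.mpr ⟨by have := hz.1; linarith, hz.2.1.le⟩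
    have h2 : |z.im| ≤ η 0 := by
      have := hz.2.2.1; have h' := hz.2.2.2; have := hmax z.re
      rw [abs_le]; constructor <;> linarith
    calc ‖z‖ ≤ |z.re| + |z.im| := Complex.norm_le_abs_re_add_abs_im z
      _ ≤ 3 * Λ + η 0 := add_le_add h1 h2
  have hz0mem : ∀ x : ℝ, -Λ < x → x < 3 * Λ →
      ((x : ℂ) + (η Λ / 2 : ℝ) • Complex.I) ∈ U := by
    intro x h1 h2
    have hre : ((x : ℂ) + (η Λ / 2 : ℝ) • Complex.I).re = x := by
      simp [Complex.real_smul]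
    have him : ((x : ℂ) + (η Λ / 2 : ℝ) • Complex.I).im = η Λ / 2 := by
      simp [Complex.real_smul]
    refine ⟨by rw [hre]; exact h1, by rw [hre]; exact h2, ?_, ?_⟩
    · rw [him]; linarith
    · rw [him, hre]; have := hmin x; linarith
  have hne : U.Nonempty := ⟨(0 : ℂ) + (η Λ / 2 : ℝ) • Complex.I, by
    have := hz0mem 0 (by linarith) (by linarith)
    simpa using this⟩
  -- preconnectedness
  have hconn : IsPreconnected U := by
    set S0 : Set ℂ := {z : ℂ | -Λ < z.re ∧ z.re < 3 * Λ ∧ 0 < z.im ∧ z.im < η Λ}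
      with hS0def
    have hS0conv : Convex ℝ S0 := by
      have h1 := convex_halfSpace_re_gt (-Λ)
      have h2 := convex_halfSpace_re_lt (3 * Λ)
      have h3 := convex_halfSpace_im_gt 0
      have h4 := convex_halfSpace_im_lt (η Λ)
      exact h1.inter (h2.inter (h3.inter h4))
    have hS0conn : IsPreconnected S0 := hS0conv.isPreconnected
    have hS0sub : S0 ⊆ U := by
      intro z hz
      exact ⟨hz.1, hz.2.1, hz.2.2.1, lt_of_lt_of_le hz.2.2.2 (hmin z.re)⟩
    have hseg : ∀ x : ℝ, IsPreconnected {z : ℂ | z.re = x ∧ 0 < z.im ∧ z.im < η x} := by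
      intro x
      have himg : {z : ℂ | z.re = x ∧ 0 < z.im ∧ z.im < η x}
          = (fun t : ℝ => (x : ℂ) + t • Complex.I) '' (Ioo 0 (η x)) := by
        ext z
        constructor
        · rintro ⟨h1, h2, h3⟩
          refine ⟨z.im, ⟨h2, h3⟩, ?_⟩
          apply Complex.ext <;> simp [Complex.real_smul, h1]
        · rintro ⟨t, ht, rfl⟩
          refine ⟨by simp [Complex.real_smul], ?_, ?_⟩ <;>
            simp [Complex.real_smul, ht.1, ht.2]
      rw [himg]
      exact isPreconnected_Ioo.image _
        ((continuous_const.add (continuous_id.smul continuous_const)).continuousOn)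
    have hUnion : U = ⋃₀ ((fun x : ℝ => {z : ℂ | z.re = x ∧ 0 < z.im ∧ z.im < η x} ∪ S0)
        '' (Ioo (-Λ) (3 * Λ))) := by
      ext z
      constructor
      · intro hz
        refine ⟨{w : ℂ | w.re = z.re ∧ 0 < w.im ∧ w.im < η z.re} ∪ S0,
          ⟨z.re, ⟨hz.1, hz.2.1⟩, rfl⟩, Or.inl ⟨rfl, hz.2.2.1, hz.2.2.2⟩⟩
      · rintro ⟨s, ⟨x, hx, rfl⟩, hzs⟩
        rcases hzs with h | h
        · exact ⟨h.1 ▸ hx.1, h.1 ▸ hx.2, h.2.1, h.1 ▸ h.2.2⟩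
        · exact hS0sub h
    rw [hUnion]
    apply isPreconnected_sUnion ((0 : ℂ) + (η Λ / 2 : ℝ) • Complex.I)
    · rintro s ⟨x, hx, rfl⟩
      right
      have hre : ((0 : ℂ) + (η Λ / 2 : ℝ) • Complex.I).re = 0 := by
        simp [Complex.real_smul]
      have him : ((0 : ℂ) + (η Λ / 2 : ℝ) • Complex.I).im = η Λ / 2 := by
        simp [Complex.real_smul]
      exact ⟨by rw [hre]; linarith, by rw [hre]; linarith,
        by rw [him]; linarith, by rw [him]; linarith⟩
    · rintro s ⟨x, hx, rfl⟩
      apply IsPreconnected.union ((x : ℂ) + (η Λ / 2 : ℝ) • Complex.I)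
      · have hre : ((x : ℂ) + (η Λ / 2 : ℝ) • Complex.I).re = x := by
          simp [Complex.real_smul]
        have him : ((x : ℂ) + (η Λ / 2 : ℝ) • Complex.I).im = η Λ / 2 := by
          simp [Complex.real_smul]
        refine ⟨hre, by rw [him]; linarith, ?_⟩
        rw [him]; have := hmin x; linarith
      · have hre : ((x : ℂ) + (η Λ / 2 : ℝ) • Complex.I).re = x := by
          simp [Complex.real_smul]
        have him : ((x : ℂ) + (η Λ / 2 : ℝ) • Complex.I).im = η Λ / 2 := by
          simp [Complex.real_smul]
        exact ⟨by rw [hre]; exact hx.1, by rw [hre]; exact hx.2,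
          by rw [him]; linarith, by rw [him]; linarith⟩
      · exact hseg x
      · exact hS0conn
  -- closure is contained in the closed region
  have hclos : closure U ⊆
      {z : ℂ | -Λ ≤ z.re ∧ z.re ≤ 3 * Λ ∧ 0 ≤ z.im ∧ z.im ≤ η z.re} := by
    apply closure_minimal
    · intro z hz; exact ⟨hz.1.le, hz.2.1.le, hz.2.2.1.le, hz.2.2.2.le⟩
    · have h1 : IsClosed {z : ℂ | -Λ ≤ z.re} := isClosed_le continuous_const Complex.continuous_re
      have h2 : IsClosed {z : ℂ | z.re ≤ 3 * Λ} := isClosed_le Complex.continuous_re continuous_const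
      have h3 : IsClosed {z : ℂ | 0 ≤ z.im} := isClosed_le continuous_const Complex.continuous_im
      have h4 : IsClosed {z : ℂ | z.im ≤ η z.re} :=
        isClosed_le Complex.continuous_im (hηc.comp Complex.continuous_re)
      exact h1.inter (h2.inter (h3.inter h4))
  -- norm formula
  have hnorm : ∀ z : ℂ, ‖f z‖ = Real.exp (-(W z)) := by
    intro z
    rw [hfdef]
    rw [Complex.norm_exp]
    congr 1
    rw [hHdef, hWdef]
    simp [Complex.add_re, Complex.ofReal_re, Complex.real_smul, Complex.mul_re,
      Complex.I_re, Complex.I_im, Complex.ofReal_im]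
  -- boundary nonnegativity
  have hbdry : ∀ z : ℂ, (z.im = 0 ∨ z.im = η z.re) → 0 ≤ W z := by
    intro z hz
    rcases hz with h | h
    · rw [hWdef]
      have := hbot z.re
      rw [CrestAux.py_eq hΨ, ← hFdef] at this
      simp only [h]
      simpa using this
    · rw [hWdef]
      have h1 := hsurf z.re
      rw [CrestAux.py_eq hΨ, ← hFdef] at h1
      have h2 : k * η z.re ≤ k * η 0 := by
        apply mul_le_mul_of_nonneg_left (hmax z.re) hk.le
      have h3 : k * η 0 = c := div_mul_cancel₀ c hη0.ne'
      simp only [h]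
      have : c ≤ F (z.re, η z.re) (0, 1) := h1
      linarith
  -- maximum principle
  obtain ⟨zs, hzsf, hzsm⟩ := Complex.exists_mem_frontier_isMaxOn_norm hbounded hne hfd
  have hzscl : zs ∈ closure U := frontier_subset_closure hzsf
  have hzsK := hclos hzscl
  have hzsnU : zs ∉ U := by
    rw [hUopen.frontier_eq] at hzsf; exact hzsf.2
  have hWmin : ∀ z ∈ closure U, W zs ≤ W z := by
    intro z hz
    have h1 : ‖f z‖ ≤ ‖f zs‖ := hzsm hz
    rw [hnorm z, hnorm zs] at h1
    have := Real.exp_le_exp.mp h1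
    linarith
  have hmain : ∀ z ∈ closure U, 0 ≤ W z := by
    have hcases : zs.im = 0 ∨ zs.im = η zs.re ∨
        ((zs.re = -Λ ∨ zs.re = 3 * Λ) ∧ 0 < zs.im ∧ zs.im < η zs.re) := by
      rcases eq_or_lt_of_le hzsK.2.2.1 with h | him0
      · exact Or.inl h.symm
      rcases eq_or_lt_of_le hzsK.2.2.2 with h | himt
      · exact Or.inr (Or.inl h)
      have hside : ¬(-Λ < zs.re ∧ zs.re < 3 * Λ) := by
        intro hcon
        exact hzsnU ⟨hcon.1, hcon.2, him0, himt⟩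
      rcases eq_or_lt_of_le hzsK.1 with h | h1
      · exact Or.inr (Or.inr ⟨Or.inl h.symm, him0, himt⟩)
      rcases eq_or_lt_of_le hzsK.2.1 with h | h2
      · exact Or.inr (Or.inr ⟨Or.inr h, him0, himt⟩)
      · exact absurd ⟨h1, h2⟩ hside
    -- bottom corner point is in the closure
    have hb0 : (0 : ℂ) ∈ closure U := by
      have ht : Filter.Tendsto (fun t : ℝ => ((t : ℝ) • Complex.I : ℂ))
          (nhdsWithin 0 (Ioi 0)) (nhds 0) := by
        have h1 : Continuous fun t : ℝ => ((t : ℝ) • Complex.I : ℂ) :=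
          continuous_id.smul continuous_const
        have := (h1.tendsto 0).mono_left (nhdsWithin_le_nhds (s := Ioi (0:ℝ)))
        simpa using this
      apply mem_closure_of_tendsto ht
      filter_upwards [Ioo_mem_nhdsGT_of_mem (left_mem_Ico.mpr hη0)] with t ht
      have hre : ((t : ℝ) • Complex.I : ℂ).re = 0 := by simp [Complex.real_smul]
      have him : ((t : ℝ) • Complex.I : ℂ).im = t := by simp [Complex.real_smul]
      exact ⟨by rw [hre]; linarith, by rw [hre]; linarith,
        by rw [him]; exact ht.1, by rw [him, hre]; exact ht.2⟩
    have hW0 : 0 ≤ W 0 := by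
      apply hbdry
      left; simp
    rcases hcases with h | h | h
    · intro z hz; exact le_trans (hbdry zs (Or.inl h)) (hWmin z hz)
    · intro z hz; exact le_trans (hbdry zs (Or.inr h)) (hWmin z hz)
    · -- side case: translate into the interior by periodicity
      obtain ⟨hre, him0, himt⟩ := h
      have hshift : ∃ z' : ℂ, z' ∈ U ∧ W z' = W zs := by
        rcases hre with h | h
        · refine ⟨zs + ((2 * Λ : ℝ) : ℂ), ?_, ?_⟩
          · have hre' : (zs + ((2 * Λ : ℝ) : ℂ)).re = zs.re + 2 * Λ := by simp
            have him' : (zs + ((2 * Λ : ℝ) : ℂ)).im = zs.im := by simp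
            have hηeq : η (zs.re + 2 * Λ) = η zs.re := hperiodic zs.re
            refine ⟨?_, ?_, ?_, ?_⟩
            · rw [hre', h]; linarith
            · rw [hre', h]; linarith
            · rw [him']; exact him0
            · rw [him', hre', hηeq]; exact himt
          · rw [hWdef]
            simp only [Complex.add_re, Complex.add_im, Complex.ofReal_re, Complex.ofReal_im,
              add_zero]
            have hpy := hpyper zs.re zs.im
            rw [CrestAux.py_eq hΨ, CrestAux.py_eq hΨ, ← hFdef] at hpy
            rw [hpy]
        · refine ⟨zs - ((2 * Λ : ℝ) : ℂ), ?_, ?_⟩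
          · have hre' : (zs - ((2 * Λ : ℝ) : ℂ)).re = zs.re - 2 * Λ := by simp
            have him' : (zs - ((2 * Λ : ℝ) : ℂ)).im = zs.im := by simp
            have hηeq : η (zs.re - 2 * Λ) = η zs.re := by
              have := hperiodic (zs.re - 2 * Λ)
              rw [sub_add_cancel] at this
              exact this.symm
            refine ⟨?_, ?_, ?_, ?_⟩
            · rw [hre', h]; linarith
            · rw [hre', h]; linarith
            · rw [him']; exact him0
            · rw [him', hre', hηeq]; exact himt
          · rw [hWdef]
            simp only [Complex.sub_re, Complex.sub_im, Complex.ofReal_re, Complex.ofReal_im,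
              sub_zero]
            have hpy := hpyper (zs.re - 2 * Λ) zs.im
            rw [sub_add_cancel] at hpy
            rw [CrestAux.py_eq hΨ, CrestAux.py_eq hΨ, ← hFdef] at hpy
            rw [hpy]
      obtain ⟨z', hz'U, hWeq⟩ := hshift
      have hmax' : IsMaxOn (norm ∘ f) U z' := by
        intro y hy
        have h1 : ‖f y‖ ≤ ‖f zs‖ := hzsm (subset_closure hy)
        show ‖f y‖ ≤ ‖f z'‖
        rw [hnorm z', hnorm zs, hWeq] at *
        exact h1
      have heq := Complex.norm_eqOn_closure_of_isPreconnected_of_isMaxOn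
        hconn hUopen hfd hz'U hmax'
      have h0 : ‖f 0‖ = ‖f z'‖ := heq hb0
      rw [hnorm 0, hnorm z'] at h0
      have hWz' : W 0 = W z' := neg_injective (Real.exp_eq_exp.mp h0)
      intro z hz
      have h1 := hWmin z hz
      rw [← hWeq, ← hWz'] at h1
      linarith
  -- the crest-line estimate
  have hIoo : ∀ y ∈ Ioo (0:ℝ) (η 0), k * y ≤ F (0, y) (0, 1) := by
    intro y hy
    have hmem : ((y : ℝ) • Complex.I : ℂ) ∈ U := by
      have hre : ((y : ℝ) • Complex.I : ℂ).re = 0 := by simp [Complex.real_smul]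
      have him : ((y : ℝ) • Complex.I : ℂ).im = y := by simp [Complex.real_smul]
      exact ⟨by rw [hre]; linarith, by rw [hre]; linarith,
        by rw [him]; exact hy.1, by rw [him, hre]; exact hy.2⟩
    have := hmain _ (subset_closure hmem)
    rw [hWdef] at this
    simp only [Complex.real_smul] at this
    simp at this
    linarith [this]
  have hcrest : ∀ y ∈ Icc (0:ℝ) (η 0), k * y ≤ py ψ 0 y := by
    have hclosed : IsClosed {y : ℝ | k * y ≤ F (0, y) (0, 1)} := by
      apply isClosed_le
      · exact continuous_const.mul continuous_id
      · exact hPcont.comp (continuous_const.prodMk continuous_id)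
    have hsub : Icc (0:ℝ) (η 0) ⊆ {y : ℝ | k * y ≤ F (0, y) (0, 1)} := by
      rw [← closure_Ioo hη0.ne]
      exact closure_minimal hIoo hclosed
    intro y hy
    rw [CrestAux.py_eq hΨ, ← hFdef]
    exact hsub hy
  -- fundamental theorem of calculus
  have hintcont : Continuous (fun y => py ψ 0 y) := by
    have h : (fun y => py ψ 0 y) = fun y => F (0, y) (0, 1) := by
      funext y; rw [CrestAux.py_eq hΨ, ← hFdef]
    rw [h]
    exact hPcont.comp (continuous_const.prodMk continuous_id)
  have hint : IntervalIntegrable (fun y => py ψ 0 y) MeasureTheory.volume 0 (η 0) :=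
    hintcont.intervalIntegrable 0 (η 0)
  have hFTC : (∫ y in (0:ℝ)..(η 0), py ψ 0 y) = 1 := by
    have hd : ∀ y ∈ uIcc (0:ℝ) (η 0), HasDerivAt (fun t => ψ 0 t) (py ψ 0 y) y := by
      intro y _
      rw [CrestAux.py_eq hΨ]
      exact CrestAux.vertDeriv hΨ 0 y
    have := intervalIntegral.integral_eq_sub_of_hasDerivAt hd hint
    rw [S.surface_val 0, S.bottom_val 0] at this
    rw [this]; ring
  have hlower : (∫ y in (0:ℝ)..(η 0), k * y) ≤ ∫ y in (0:ℝ)..(η 0), py ψ 0 y := by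
    apply intervalIntegral.integral_mono_on hη0.le _ hint hcrest
    exact (continuous_const.mul continuous_id).intervalIntegrable 0 (η 0)
  have hlval : (∫ y in (0:ℝ)..(η 0), k * y) = k * (η 0) ^ 2 / 2 := by
    rw [intervalIntegral.integral_const_mul, integral_id]
    ring
  have hkey : c * η 0 ≤ 2 := by
    have h1 : k * (η 0) ^ 2 / 2 ≤ 1 := by
      rw [← hlval, ← hFTC]
      exact hlower
    have h2 : k * (η 0) ^ 2 = c * η 0 := by
      rw [hkdef]
      field_simp
    linarith
  -- final arithmetic
  have hs2γpos : 0 < Real.sqrt (2 * γ) := Real.sqrt_pos.mpr (by linarith)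
  have h2γ3 : Real.sqrt (2 * γ ^ 3) = γ * Real.sqrt (2 * γ) := by
    rw [show (2 * γ ^ 3 : ℝ) = γ ^ 2 * (2 * γ) by ring, Real.sqrt_mul (sq_nonneg γ),
      Real.sqrt_sq hγ.le]
  have hsdiv : Real.sqrt (2 / γ) = Real.sqrt (2 * γ) / γ := by
    rw [show (2 / γ : ℝ) = (2 * γ) / γ ^ 2 by rw [div_eq_div_iff hγ.ne' (by positivity)]; ring,
      Real.sqrt_div (by linarith : (0:ℝ) ≤ 2 * γ), Real.sqrt_sq hγ.le]
  have hss : Real.sqrt (2 * γ) * Real.sqrt (2 * γ) = 2 * γ :=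
    Real.mul_self_sqrt (by linarith)
  have hγc : γ * c = γ * Real.sqrt (2 * γ) - δ := by
    rw [hcdef, mul_sub]
    congr 1
    field_simp
  have hrhs : Real.sqrt (2 / γ) * (1 / (1 - δ / Real.sqrt (2 * γ ^ 3))) = 2 / c := by
    rw [h2γ3, hsdiv]
    have hγs : (γ * Real.sqrt (2 * γ)) ≠ 0 := (mul_pos hγ hs2γpos).ne'
    have h1 : 1 - δ / (γ * Real.sqrt (2 * γ)) = (γ * c) / (γ * Real.sqrt (2 * γ)) := by
      rw [hγc, sub_div, div_self hγs]
    rw [h1, one_div_div]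
    rw [div_mul_div_comm]
    rw [div_eq_div_iff (mul_pos hγ (mul_pos hγ hc)).ne' hc.ne']
    linear_combination (γ * c) * hss
  rw [hrhs]
  rw [le_div_iff₀ hc]
  linarith
end
end

section
/- For every γ > 0, the function R(s) = ½s² + γ + (−s + √(s² + 2γ))/γ on [0, ∞) has a unique positive critical point s_c (the unique s > 0 with R′(s) = 0, equivalently s − 1/γ + s/(γ√(s² + 2γ)) = 0); R is strictly decreasing on [0, s_c] and strictly increasing on [s_c, ∞); consequently, for every r with R(s_c) < r ≤ R(0) there are exactly two values s ∈ [0, ∞) with R(s) = r, one in [0, s_c) and one in (s_c, ∞). -/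
noncomputable section

open Real Set

private lemma bernR_hasDeriv (γ : ℝ) (hγ : 0 < γ) (s : ℝ) :
    HasDerivAt (bernR γ) (s - 1 / γ + s / (γ * Real.sqrt (s ^ 2 + 2 * γ))) s := by
  have hpos : 0 < s ^ 2 + 2 * γ := by positivity
  have hsq : 0 < Real.sqrt (s ^ 2 + 2 * γ) := Real.sqrt_pos.2 hpos
  have h1 : HasDerivAt (fun t : ℝ => t ^ 2 + 2 * γ) (2 * s) s := by
    simpa using ((hasDerivAt_pow 2 s).add_const (2 * γ))
  have h2 : HasDerivAt (fun t : ℝ => Real.sqrt (t ^ 2 + 2 * γ))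
      (s / Real.sqrt (s ^ 2 + 2 * γ)) s := by
    have := (Real.hasDerivAt_sqrt (ne_of_gt hpos)).comp s h1
    exact this.congr_deriv (by rw [div_mul_eq_mul_div, one_mul, mul_div_mul_left _ _ two_ne_zero])
  have h3 : HasDerivAt (fun t : ℝ => lamDepth γ t)
      ((-1 + s / Real.sqrt (s ^ 2 + 2 * γ)) / γ) s := by
    unfold lamDepth
    exact ((hasDerivAt_neg s).add h2).div_const γ
  have h4 : HasDerivAt (fun t : ℝ => t ^ 2 / 2 + γ) s s := by
    simpa using (((hasDerivAt_pow 2 s).div_const 2).add_const γ)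
  have h5 := h4.add h3
  have heq : (fun t : ℝ => t ^ 2 / 2 + γ + lamDepth γ t) = bernR γ := rfl
  rw [show ((fun t : ℝ => t ^ 2 / 2 + γ) + fun t => lamDepth γ t) = bernR γ from rfl] at h5
  refine h5.congr_deriv ?_
  ring

private lemma g_strictMono (γ : ℝ) (hγ : 0 < γ) :
    StrictMonoOn (fun s => s - 1 / γ + s / (γ * Real.sqrt (s ^ 2 + 2 * γ)))
      (Set.Ici (0 : ℝ)) := by
  intro a ha b hb hab
  simp only [Set.mem_Ici] at ha hb
  have hb0 : 0 < b := lt_of_le_of_lt ha hab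
  have hA : 0 < Real.sqrt (a ^ 2 + 2 * γ) := Real.sqrt_pos.2 (by positivity)
  have hB : 0 < Real.sqrt (b ^ 2 + 2 * γ) := Real.sqrt_pos.2 (by positivity)
  have hA2 : Real.sqrt (a ^ 2 + 2 * γ) ^ 2 = a ^ 2 + 2 * γ :=
    Real.sq_sqrt (by positivity)
  have hB2 : Real.sqrt (b ^ 2 + 2 * γ) ^ 2 = b ^ 2 + 2 * γ :=
    Real.sq_sqrt (by positivity)
  have key : a * Real.sqrt (b ^ 2 + 2 * γ) < b * Real.sqrt (a ^ 2 + 2 * γ) := by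
    have hab2 : a ^ 2 < b ^ 2 := by nlinarith
    have h1 : (a * Real.sqrt (b ^ 2 + 2 * γ)) ^ 2 < (b * Real.sqrt (a ^ 2 + 2 * γ)) ^ 2 := by
      nlinarith [hA2, hB2, mul_pos hγ (sub_pos.2 hab2)]
    exact lt_of_pow_lt_pow_left₀ 2 (mul_nonneg hb0.le hA.le) h1
  have h5 : a / (γ * Real.sqrt (a ^ 2 + 2 * γ)) < b / (γ * Real.sqrt (b ^ 2 + 2 * γ)) := by
    rw [div_lt_div_iff₀ (by positivity) (by positivity)]
    nlinarith [key]
  simp only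
  linarith

private lemma g_continuous (γ : ℝ) (hγ : 0 < γ) :
    Continuous (fun s : ℝ => s - 1 / γ + s / (γ * Real.sqrt (s ^ 2 + 2 * γ))) := by
  apply Continuous.add
  · exact (continuous_id.sub continuous_const)
  · apply Continuous.div continuous_id
    · exact continuous_const.mul (Real.continuous_sqrt.comp (by continuity))
    · intro s
      have : 0 < Real.sqrt (s ^ 2 + 2 * γ) := Real.sqrt_pos.2 (by positivity)
      positivity

private lemma lamDepth_nonneg (γ : ℝ) (hγ : 0 < γ) {s : ℝ} (hs : 0 ≤ s) :
    0 ≤ lamDepth γ s := by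
  have h : s ≤ Real.sqrt (s ^ 2 + 2 * γ) := by
    have : s = Real.sqrt (s ^ 2) := by rw [Real.sqrt_sq hs]
    rw [this]
    exact Real.sqrt_le_sqrt (by nlinarith)
  unfold lamDepth
  apply div_nonneg _ hγ.le
  nlinarith [Real.sqrt_le_sqrt (show s ^ 2 ≤ s ^ 2 + 2 * γ by nlinarith), Real.sqrt_sq hs]

/-- Properties of the laminar Bernoulli function `R`: it has a unique positive critical
point `s_c`, solving `s - 1/γ + s/(γ√(s² + 2γ)) = 0`; `R` is strictly decreasing on
`[0, s_c]` and strictly increasing on `[s_c, ∞)`; and for every `r ∈ (R(s_c), R(0)]`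
there are exactly two roots of `R(s) = r` in `[0, ∞)`, one in `[0, s_c)` and one in
`(s_c, ∞)`. -/
theorem bernR_critical_point (γ : ℝ) (hγ : 0 < γ) :
    ∃ sc : ℝ, 0 < sc ∧ deriv (bernR γ) sc = 0 ∧
      (∀ s : ℝ, 0 < s → deriv (bernR γ) s = 0 → s = sc) ∧
      sc - 1 / γ + sc / (γ * Real.sqrt (sc ^ 2 + 2 * γ)) = 0 ∧
      StrictAntiOn (bernR γ) (Set.Icc 0 sc) ∧
      StrictMonoOn (bernR γ) (Set.Ici sc) ∧
      ∀ r : ℝ, bernR γ sc < r → r ≤ bernR γ 0 →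
        ∃ s₁ s₂ : ℝ, (s₁ ∈ Set.Ico 0 sc ∧ bernR γ s₁ = r) ∧
          (s₂ ∈ Set.Ioi sc ∧ bernR γ s₂ = r) ∧
          ∀ s : ℝ, 0 ≤ s → bernR γ s = r → s = s₁ ∨ s = s₂ := by
  set g : ℝ → ℝ := fun s => s - 1 / γ + s / (γ * Real.sqrt (s ^ 2 + 2 * γ)) with hg
  have hderiv : ∀ s, deriv (bernR γ) s = g s := fun s => (bernR_hasDeriv γ hγ s).deriv
  have hcont : Continuous (bernR γ) := by
    rw [continuous_iff_continuousAt]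
    exact fun x => (bernR_hasDeriv γ hγ x).differentiableAt.continuousAt
  have hmono := g_strictMono γ hγ
  -- find the critical point by IVT on [0, 1/γ + 1]
  have hg0 : g 0 = -(1 / γ) := by simp [hg]
  have hg0neg : g 0 < 0 := by rw [hg0]; simp; positivity
  set M : ℝ := 1 / γ + 1 with hM
  have hMpos : 0 < M := by positivity
  have hgM : 0 < g M := by
    have h1 : 0 ≤ M / (γ * Real.sqrt (M ^ 2 + 2 * γ)) := by
      have : 0 < Real.sqrt (M ^ 2 + 2 * γ) := Real.sqrt_pos.2 (by positivity)
      positivity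
    simp only [hg]
    nlinarith
  obtain ⟨sc, hscmem, hscval⟩ : ∃ sc ∈ Set.Icc (0 : ℝ) M, g sc = 0 := by
    have := intermediate_value_Icc hMpos.le ((g_continuous γ hγ).continuousOn)
    have h0 : (0 : ℝ) ∈ Set.Icc (g 0) (g M) := ⟨hg0neg.le, hgM.le⟩
    obtain ⟨sc, hsc, hval⟩ := this h0
    exact ⟨sc, hsc, hval⟩
  have hscpos : 0 < sc := by
    rcases hscmem.1.lt_or_eq with h | h
    · exact h
    · exfalso; rw [← h] at hscval; rw [hscval] at hg0neg; exact lt_irrefl 0 hg0neg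
  refine ⟨sc, hscpos, ?_, ?_, ?_, ?_, ?_, ?_⟩
  · rw [hderiv]; exact hscval
  · intro s hs hds
    rw [hderiv] at hds
    exact hmono.injOn (Set.mem_Ici.2 hs.le) (Set.mem_Ici.2 hscpos.le)
      (hds.trans hscval.symm)
  · exact hscval
  · -- strictly decreasing on [0, sc]
    apply strictAntiOn_of_deriv_neg (convex_Icc 0 sc) hcont.continuousOn
    intro x hx
    rw [interior_Icc] at hx
    rw [hderiv]
    have h2 : g x < g sc := hmono (Set.mem_Ici.2 hx.1.le) (Set.mem_Ici.2 hscpos.le) hx.2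
    rw [hscval] at h2
    exact h2
  · -- strictly increasing on [sc, ∞)
    apply strictMonoOn_of_deriv_pos (convex_Ici sc) hcont.continuousOn
    intro x hx
    rw [interior_Ici] at hx
    rw [hderiv]
    have h2 : g sc < g x := hmono (Set.mem_Ici.2 hscpos.le) (Set.mem_Ici.2 (hscpos.le.trans hx.le)) hx
    rw [hscval] at h2
    exact h2
  · -- two roots
    intro r hr1 hr2
    have hanti : StrictAntiOn (bernR γ) (Set.Icc 0 sc) := by
      apply strictAntiOn_of_deriv_neg (convex_Icc 0 sc) hcont.continuousOn
      intro x hx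
      rw [interior_Icc] at hx
      rw [hderiv]
      have h2 : g x < g sc := hmono (Set.mem_Ici.2 hx.1.le) (Set.mem_Ici.2 hscpos.le) hx.2
      rw [hscval] at h2; exact h2
    have hmono' : StrictMonoOn (bernR γ) (Set.Ici sc) := by
      apply strictMonoOn_of_deriv_pos (convex_Ici sc) hcont.continuousOn
      intro x hx
      rw [interior_Ici] at hx
      rw [hderiv]
      have h2 : g sc < g x := hmono (Set.mem_Ici.2 hscpos.le) (Set.mem_Ici.2 (hscpos.le.trans hx.le)) hx
      rw [hscval] at h2; exact h2
    -- s₁ via IVT on [0, sc]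
    obtain ⟨s₁, hs₁mem, hs₁val⟩ : ∃ s₁ ∈ Set.Icc (0 : ℝ) sc, bernR γ s₁ = r := by
      have := intermediate_value_Icc' hscpos.le hcont.continuousOn
      exact this ⟨hr1.le, hr2⟩
    have hs₁lt : s₁ < sc := by
      rcases hs₁mem.2.lt_or_eq with h | h
      · exact h
      · exfalso; rw [h] at hs₁val; rw [hs₁val] at hr1; exact lt_irrefl r hr1
    -- s₂ via IVT on [sc, N]
    set N : ℝ := max sc (|r| + 1) with hN
    have hNsc : sc ≤ N := le_max_left _ _
    have hNr : r ≤ bernR γ N := by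
      have h1 : |r| + 1 ≤ N := le_max_right _ _
      have hNpos : 0 < N := lt_of_lt_of_le (by positivity) h1
      have h2 : 2 * r ≤ N ^ 2 := by nlinarith [abs_nonneg r, le_abs_self r, sq_abs r]
      have h3 : 0 ≤ lamDepth γ N := lamDepth_nonneg γ hγ hNpos.le
      unfold bernR
      nlinarith
    obtain ⟨s₂, hs₂mem, hs₂val⟩ : ∃ s₂ ∈ Set.Icc sc N, bernR γ s₂ = r := by
      have := intermediate_value_Icc hNsc hcont.continuousOn
      exact this ⟨hr1.le, hNr⟩
    have hs₂gt : sc < s₂ := by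
      rcases hs₂mem.1.lt_or_eq with h | h
      · exact h
      · exfalso; rw [← h] at hs₂val; rw [hs₂val] at hr1; exact lt_irrefl r hr1
    refine ⟨s₁, s₂, ⟨⟨hs₁mem.1, hs₁lt⟩, hs₁val⟩, ⟨hs₂gt, hs₂val⟩, ?_⟩
    intro s hs hsr
    rcases le_or_gt s sc with h | h
    · left
      exact hanti.injOn ⟨hs, h⟩ hs₁mem (hsr.trans hs₁val.symm)
    · right
      exact hmono'.injOn (Set.mem_Ici.2 h.le) (Set.mem_Ici.2 hs₂mem.1)
        (hsr.trans hs₂val.symm)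
end
end

section
/- There exist absolute constants C > 0 and γ₀ > 0 such that for every γ > γ₀ the unique positive critical point s_c of R satisfies |s_c − 1/γ| ≤ C·γ^(−3/2), and moreover the corresponding laminar depth satisfies |d(s_c) − √(2/γ) + γ⁻²| ≤ C·γ^(−5/2). -/
noncomputable section

open Real Set

/-- Asymptotics of the critical point: `s_c = 1/γ + O(γ^(-3/2))` and
`d(s_c) = √(2/γ) - γ⁻² + O(γ^(-5/2))` for large `γ`. -/
theorem critical_point_asymptotics :
    ∃ C > (0 : ℝ), ∃ γ₀ > (0 : ℝ), ∀ γ > γ₀, ∀ sc : ℝ, IsCrit γ sc →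
      |sc - 1 / γ| ≤ C * γ ^ (-(3 : ℝ) / 2) ∧
      |lamDepth γ sc - Real.sqrt (2 / γ) + 1 / γ ^ 2| ≤ C * γ ^ (-(5 : ℝ) / 2) := by
  refine ⟨2, by norm_num, 1, by norm_num, ?_⟩
  intro γ hγ sc hcrit
  obtain ⟨hs0, heq0⟩ := hcrit
  have hγ0 : (0:ℝ) < γ := by linarith
  have hγne : γ ≠ 0 := ne_of_gt hγ0
  set G := Real.sqrt γ with hGdef
  set T := Real.sqrt (2*γ) with hTdef
  set Q := Real.sqrt (sc^2 + 2*γ) with hQdef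
  have hQ2 : Q^2 = sc^2 + 2*γ := Real.sq_sqrt (by positivity)
  have hT2 : T^2 = 2*γ := Real.sq_sqrt (by positivity)
  have hG2 : G^2 = γ := Real.sq_sqrt hγ0.le
  have hG0 : 0 < G := Real.sqrt_pos.mpr hγ0
  have hT0 : 0 < T := Real.sqrt_pos.mpr (by positivity)
  have hQ0 : 0 < Q := Real.sqrt_pos.mpr (by positivity)
  have hGT : G ≤ T := Real.sqrt_le_sqrt (by linarith)
  have hTQ : T ≤ Q := Real.sqrt_le_sqrt (by nlinarith)
  have h12 : γ ^ ((1:ℝ)/2) = G := by rw [hGdef, Real.sqrt_eq_rpow]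
  have hsqrt : Real.sqrt (2/γ) = T/γ := by
    have h1 : (2:ℝ)*γ = (2/γ) * γ^2 := by field_simp
    rw [hTdef, h1, Real.sqrt_mul (by positivity), Real.sqrt_sq hγ0.le]
    field_simp
  have hlam : lamDepth γ sc = (-sc + Q)/γ := by rw [lamDepth, ← hQdef]
  clear_value G T Q
  have hG1 : 1 < G := by nlinarith
  have hGQ : G ≤ Q := hGT.trans hTQ
  -- rearrange the critical point equation
  have heq : Q * (1 - sc*γ) = sc := by
    have hQne : Q ≠ 0 := ne_of_gt hQ0
    field_simp at heq0
    nlinarith [heq0]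
  clear heq0
  have hu : 0 < 1 - sc*γ := by
    rcases lt_trichotomy (1 - sc*γ) 0 with h|h|h
    · nlinarith
    · nlinarith
    · exact h
  have key1 : (1 - sc*γ) * (γ*G) ≤ 1 := by
    nlinarith [mul_nonneg hu.le hG0.le, mul_pos hγ0 hG0]
  have hQT : (Q-T)*(Q+T) = sc^2 := by linear_combination hQ2 - hT2
  have hsg : sc*γ ≤ 1 := by linarith
  have e1 : sc^2*γ^2 ≤ 1 := by
    calc sc^2*γ^2 = (sc*γ)*(sc*γ) := by ring
    _ ≤ 1*1 := mul_le_mul hsg hsg (mul_pos hs0 hγ0).le zero_le_one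
    _ = 1 := by ring
  have e2 : sc^2*γ^2*G ≤ Q+T := by
    have h3 : sc^2*γ^2*G ≤ 1*G := mul_le_mul_of_nonneg_right e1 hG0.le
    linarith
  have hQT2 : (Q-T)*(γ^2*G)*(Q+T) = sc^2*γ^2*G := by linear_combination (γ^2*G) * hQT
  have key2 : (Q - T) * (γ^2*G) ≤ 1 := by
    rw [← mul_le_mul_iff_of_pos_right (add_pos hQ0 hT0), hQT2, one_mul]
    exact e2
  have hQTnn : 0 ≤ Q - T := sub_nonneg.mpr hTQ
  -- rpow computations
  have hr32 : γ ^ (-(3:ℝ)/2) = (γ*G)⁻¹ := by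
    rw [show (-(3:ℝ)/2) = -(3/2 : ℝ) by norm_num, Real.rpow_neg hγ0.le]
    congr 1
    rw [show ((3:ℝ)/2) = 1 + 1/2 by norm_num, Real.rpow_add hγ0, Real.rpow_one, h12]
  have hr52 : γ ^ (-(5:ℝ)/2) = (γ^2*G)⁻¹ := by
    rw [show (-(5:ℝ)/2) = -(5/2 : ℝ) by norm_num, Real.rpow_neg hγ0.le]
    congr 1
    rw [show ((5:ℝ)/2) = 2 + 1/2 by norm_num, Real.rpow_add hγ0, h12,
      show ((2:ℝ)) = ((2:ℕ):ℝ) by norm_num, Real.rpow_natCast]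
  have hγG : 0 < γ*G := mul_pos hγ0 hG0
  have hγ2G : 0 < γ^2*G := by positivity
  constructor
  · have hsle : sc - 1/γ ≤ 0 := by
      rw [sub_nonpos, le_div_iff₀ hγ0]
      exact hsg
    rw [abs_of_nonpos hsle, hr32, ← div_eq_mul_inv, le_div_iff₀ hγG]
    have h5 : -(sc - 1/γ) * (γ*G) = (1-sc*γ)*G := by field_simp; ring
    rw [h5]
    have h7 : (1-sc*γ)*G ≤ (1-sc*γ)*G*γ := le_mul_of_one_le_right (mul_nonneg hu.le hG0.le) hγ.le
    have k1' : (1-sc*γ)*G*γ = (1-sc*γ)*(γ*G) := by ring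
    linarith
  · have hE : lamDepth γ sc - Real.sqrt (2/γ) + 1/γ^2 = ((Q - T) + (1 - sc*γ)/γ)/γ := by
      rw [hsqrt, hlam]
      field_simp
      ring
    rw [hE, hr52]
    have hnum0 : 0 ≤ (Q - T) + (1 - sc*γ)/γ := by positivity
    rw [abs_of_nonneg (by positivity)]
    have b1 : Q - T ≤ (γ^2*G)⁻¹ := by
      rw [← one_div, le_div_iff₀ hγ2G]; exact key2
    have b2 : (1 - sc*γ)/γ ≤ (γ^2*G)⁻¹ := by
      rw [← one_div, div_le_div_iff₀ hγ0 hγ2G]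
      have e : (1-sc*γ)*(γ^2*G) = (1-sc*γ)*(γ*G)*γ := by ring
      rw [e]
      exact mul_le_mul_of_nonneg_right key1 hγ0.le
    have hds : ((Q - T) + (1 - sc*γ)/γ)/γ ≤ (Q - T) + (1 - sc*γ)/γ := by
      apply div_le_self hnum0; linarith
    linarith
end
end

section
/- There exist absolute constants C > 0 and γ₀ > 0 such that for every γ > γ₀ and every real number r with R(s_c) < r < R(0), one has |r − γ − √(2/γ)| ≤ C·γ⁻². -/
noncomputable section

open Real Set

/-- Asymptotics of the admissible Bernoulli constants: every
`r ∈ (R(s_c), R(0))` satisfies `r = γ + √(2/γ) + O(γ⁻²)` for large `γ`. -/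
theorem bernoulli_constant_asymptotics :
    ∃ C > (0 : ℝ), ∃ γ₀ > (0 : ℝ), ∀ γ > γ₀, ∀ sc : ℝ, IsCrit γ sc →
      ∀ r : ℝ, bernR γ sc < r → r < bernR γ 0 →
        |r - γ - Real.sqrt (2 / γ)| ≤ C / γ ^ 2 := by
  refine ⟨1, one_pos, 1, one_pos, fun γ hγ sc hcrit r hr1 hr2 => ?_⟩
  have hγ0 : (0:ℝ) < γ := lt_trans one_pos hγ
  obtain ⟨hs0, heq⟩ := hcrit
  have hsq : (0:ℝ) < Real.sqrt (sc ^ 2 + 2 * γ) := Real.sqrt_pos.2 (by positivity)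
  have hscle : sc ≤ 1 / γ := by
    have h2 : 0 ≤ sc / (γ * Real.sqrt (sc ^ 2 + 2 * γ)) :=
      div_nonneg hs0.le (mul_pos hγ0 hsq).le
    linarith
  have hsqγ : (0:ℝ) < Real.sqrt γ := Real.sqrt_pos.2 hγ0
  have hmul : Real.sqrt γ * Real.sqrt γ = γ := Real.mul_self_sqrt hγ0.le
  have hB0 : bernR γ 0 = γ + Real.sqrt (2 / γ) := by
    unfold bernR lamDepth
    have h1 : Real.sqrt (0 ^ 2 + 2 * γ) = Real.sqrt 2 * Real.sqrt γ := by
      rw [← Real.sqrt_mul (by norm_num : (0:ℝ) ≤ 2)]; norm_num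
    have h2 : Real.sqrt (2 / γ) = Real.sqrt 2 / Real.sqrt γ :=
      Real.sqrt_div (by norm_num) γ
    have h3 : Real.sqrt 2 * Real.sqrt γ / γ = Real.sqrt 2 / Real.sqrt γ := by
      rw [div_eq_div_iff hγ0.ne' hsqγ.ne', mul_assoc, hmul]
    rw [h1, h2, neg_zero, zero_add, h3]
    ring
  have hmono : Real.sqrt (2 * γ) ≤ Real.sqrt (sc ^ 2 + 2 * γ) :=
    Real.sqrt_le_sqrt (by nlinarith)
  have hkey : bernR γ 0 - bernR γ sc ≤ 1 / γ ^ 2 := by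
    unfold bernR lamDepth
    have h1 : Real.sqrt (0 ^ 2 + 2 * γ) = Real.sqrt (2 * γ) := by norm_num
    rw [h1]
    have e : 0 ^ 2 / 2 + γ + (-0 + Real.sqrt (2 * γ)) / γ -
        (sc ^ 2 / 2 + γ + (-sc + Real.sqrt (sc ^ 2 + 2 * γ)) / γ)
        = (Real.sqrt (2 * γ) + sc - Real.sqrt (sc ^ 2 + 2 * γ)) / γ - sc ^ 2 / 2 := by
      ring
    rw [e]
    have h4 : (Real.sqrt (2 * γ) + sc - Real.sqrt (sc ^ 2 + 2 * γ)) / γ ≤ sc / γ := by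
      gcongr
      linarith
    have h5 : sc / γ ≤ (1 / γ) / γ := by gcongr
    have h6 : (1 / γ) / γ = 1 / γ ^ 2 := by
      rw [div_div]; ring_nf
    nlinarith [sq_nonneg sc]
  have hub : r < γ + Real.sqrt (2 / γ) := hB0 ▸ hr2
  have hlb : γ + Real.sqrt (2 / γ) - 1 / γ ^ 2 ≤ bernR γ sc := by
    rw [← hB0]; linarith
  rw [abs_le]
  constructor <;> [linarith; nlinarith [Real.sqrt_nonneg (2/γ), sq_nonneg γ, hγ0]]
end
end
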